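/- Let X and Y be Banach spaces, μ₀ a convex Radon probability measure on X, and κ > 0 a constant with ∫_X exp(κ‖u‖_X) dμ₀(u) < ∞. Let Φ : X × Y → ℝ be continuous in u and satisfy, with constants α₁, α₂ ≥ 0 such that κ ≥ α₁ + 2α₂: (i) for every r > 0 there is M(r) ∈ ℝ with Φ(u;y) ≥ M − α₁‖u‖_X for all u ∈ X and all ‖y‖_Y < r; (ii) for every r > 0 there is K(r) > 0 with Φ(u;y) ≤ K whenever max(‖u‖_X, ‖y‖_Y) < r; (iii) for every r > 0 there is L(r) > 0 with |Φ(u₁;y) − Φ(u₂;y)| ≤ L‖u₁ − u₂‖_X whenever max(‖u₁‖_X, ‖u₂‖_X, ‖y‖_Y) < r; (iv) for every r > 0 there is C(r) ∈ ℝ with |Φ(u;y₁) − Φ(u;y₂)| ≤ exp(α₂‖u‖_X + C)‖y₁ − y₂‖_Y whenever ‖y₁‖_Y, ‖y₂‖_Y < r. Then for every y ∈ Y the normalizing constant Z(y) = ∫_X exp(−Φ(u;y)) dμ₀(u) satisfies 0 < Z(y) < ∞, so the posterior μ^y is a well-defined probability measure; moreover, for every r > 0 there is C(r) > 0 such that d_H(μ^y,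 μ^{y'}) ≤ C‖y − y'‖_Y whenever max(‖y‖_Y, ‖y'‖_Y) < r. -/

import Mathlib

open MeasureTheory Pointwise

/-- A measure `μ` on a normed space `X` is convex (log-concave) if
`μ(λA + (1−λ)B) ≥ μ(A)^λ μ(B)^{1−λ}` for all `λ ∈ [0,1]` and Borel sets `A, B`. -/
def IsConvexMeasure {X : Type*} [NormedAddCommGroup X] [NormedSpace ℝ X]
    [MeasurableSpace X] (μ : Measure X) : Prop :=
  ∀ A B : Set X, MeasurableSet A → MeasurableSet B →
    ∀ l : ℝ, 0 ≤ l → l ≤ 1 →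
      μ A ^ l * μ B ^ (1 - l) ≤ μ (l • A + (1 - l) • B)

/-- The Hellinger distance between two measures with respect to a dominating measure `Λ`. -/
noncomputable def hellingerDist {X : Type*} [MeasurableSpace X]
    (μ₁ μ₂ Λ : Measure X) : ℝ :=
  Real.sqrt ((1 / 2) * ∫ u,
    (Real.sqrt ((μ₁.rnDeriv Λ u).toReal) - Real.sqrt ((μ₂.rnDeriv Λ u).toReal)) ^ 2 ∂Λ)

/-- The posterior measure given prior `μ₀` and likelihood potential `Φ`. -/
noncomputable def posteriorMeasure {X : Type*} [MeasurableSpace X]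
    (μ₀ : Measure X) (Φ : X → ℝ) : Measure X :=
  μ₀.withDensity fun u =>
    ENNReal.ofReal ((∫ v, Real.exp (-(Φ v)) ∂μ₀)⁻¹ * Real.exp (-(Φ u)))

/-!
`Z(y)` is finite because the lower bound (i) gives `exp(-Φ(u;y)) ≤ e^{-M} exp(κ‖u‖)`, and by the
upper bound (ii) it is at least `e^{-K} μ₀(B)` for a ball `B` of positive measure, uniformly in
`‖y‖ < r`. The square roots of the posterior densities are the `L²(μ₀)`-normalizations of
`e^{-Φ(·;y)/2}`, and normalizing two vectors at most doubles their distance relative to the norm of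
the first, so `d_H(μ^y, μ^{y'})² ≤ (2 / Z(y)) ‖e^{-Φ(·;y)/2} - e^{-Φ(·;y')/2}‖²`. By the mean value
theorem, (i) and (iv) bound this integrand by `e^{2C-M}/4 · exp((α₁ + 2α₂)‖u‖) ‖y - y'‖²`, which
is integrable because `α₁ + 2α₂ ≤ κ`.
-/

lemma abs_exp_sub_exp_le (a b : ℝ) :
    |Real.exp a - Real.exp b| ≤ Real.exp (max a b) * |a - b| := by
  wlog hba : b ≤ a generalizing a b
  · rw [abs_sub_comm, max_comm, abs_sub_comm a b]
    exact this b a (le_of_not_ge hba)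
  have hexp : Real.exp a * (b - a + 1) ≤ Real.exp b := by
    rw [show Real.exp b = Real.exp a * Real.exp (b - a) by rw [← Real.exp_add]; ring_nf]
    gcongr
    exact Real.add_one_le_exp _
  rw [abs_of_nonneg (sub_nonneg.2 (Real.exp_le_exp.2 hba)), abs_of_nonneg (sub_nonneg.2 hba),
    max_eq_left hba]
  linarith

lemma exp_half_sq (x : ℝ) : Real.exp (x / 2) ^ 2 = Real.exp x := by
  rw [Real.exp_half, Real.sq_sqrt (Real.exp_pos x).le]

lemma sq_exp_neg_half_sub_le {a b n M C t α₁ α₂ κ : ℝ} (hn : 0 ≤ n) (hκ : α₁ + 2 * α₂ ≤ κ)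
    (ha : M - α₁ * n ≤ a) (hb : M - α₁ * n ≤ b) (hab : |a - b| ≤ Real.exp (α₂ * n + C) * t) :
    (Real.exp (-a / 2) - Real.exp (-b / 2)) ^ 2
      ≤ Real.exp (2 * C - M) * Real.exp (κ * n) * t ^ 2 / 4 := by
  set x := (α₁ + 2 * α₂) * n + 2 * C - M
  have hdiff : |Real.exp (-a / 2) - Real.exp (-b / 2)| ≤ Real.exp (x / 2) * t / 2 :=
    calc |Real.exp (-a / 2) - Real.exp (-b / 2)|
        ≤ Real.exp (max (-a / 2) (-b / 2)) * (|a - b| / 2) := by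
          convert abs_exp_sub_exp_le (-a / 2) (-b / 2) using 2
          rw [show -a / 2 - -b / 2 = -((a - b) / 2) by ring, abs_neg, abs_div, abs_two]
      _ ≤ Real.exp ((α₁ * n - M) / 2) * (Real.exp (α₂ * n + C) * t / 2) := by
          gcongr
          exact max_le (by linarith) (by linarith)
      _ = Real.exp (x / 2) * t / 2 := by
          rw [← mul_div_assoc, ← mul_assoc, ← Real.exp_add,
            show (α₁ * n - M) / 2 + (α₂ * n + C) = x / 2 by ring]
  calc (Real.exp (-a / 2) - Real.exp (-b / 2)) ^ 2
      ≤ (Real.exp (x / 2) * t / 2) ^ 2 := sq_le_sq' (abs_le.1 hdiff).1 (abs_le.1 hdiff).2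
    _ = Real.exp x * t ^ 2 / 4 := by rw [div_pow, mul_pow, exp_half_sq]; ring
    _ ≤ Real.exp (2 * C - M + κ * n) * t ^ 2 / 4 := by
        gcongr
        nlinarith
    _ = Real.exp (2 * C - M) * Real.exp (κ * n) * t ^ 2 / 4 := by rw [Real.exp_add]

section L2

variable {α : Type*} [MeasurableSpace α] {μ : Measure α} {f g : α → ℝ}

lemma integral_mul_le_sqrt_mul_sqrt (hf : MemLp f 2 μ) (hg : MemLp g 2 μ) :
    ∫ a, f a * g a ∂μ ≤ √(∫ a, f a ^ 2 ∂μ) * √(∫ a, g a ^ 2 ∂μ) := by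
  have holder := integral_mul_norm_le_Lp_mul_Lq Real.HolderConjugate.two_two
    (by simpa using hf) (by simpa using hg) (μ := μ)
  simp only [Real.norm_eq_abs, Real.rpow_two, sq_abs, ← Real.sqrt_eq_rpow] at holder
  refine le_trans (integral_mono (hf.integrable_mul hg) ?_ fun a => ?_) holder
  · exact (hf.integrable_mul hg).abs.congr (ae_of_all _ fun a => by simp [abs_mul])
  · simpa [abs_mul] using le_abs_self (f a * g a)

lemma integral_sq_sub_eq (hf : MemLp f 2 μ) (hg : MemLp g 2 μ) :
    ∫ a, (f a - g a) ^ 2 ∂μ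
      = ∫ a, f a ^ 2 ∂μ + ∫ a, g a ^ 2 ∂μ - 2 * ∫ a, f a * g a ∂μ := by
  have hfg : Integrable (fun a => f a * g a) μ := hf.integrable_mul hg
  calc ∫ a, (f a - g a) ^ 2 ∂μ = ∫ a, (f a ^ 2 + g a ^ 2 - 2 * (f a * g a)) ∂μ := by
        congr 1 with a; ring
    _ = _ := by
        rw [integral_sub _ (hfg.const_mul 2), integral_add hf.integrable_sq hg.integrable_sq,
          integral_const_mul]
        exact hf.integrable_sq.add hg.integrable_sq

lemma integral_sq_sub_normalize_le (hf : MemLp f 2 μ) (hg : MemLp g 2 μ)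
    (hF : 0 < ∫ a, f a ^ 2 ∂μ) (hG : 0 < ∫ a, g a ^ 2 ∂μ) :
    ∫ a, (f a / √(∫ b, f b ^ 2 ∂μ) - g a / √(∫ b, g b ^ 2 ∂μ)) ^ 2 ∂μ
      ≤ 4 / (∫ a, f a ^ 2 ∂μ) * ∫ a, (f a - g a) ^ 2 ∂μ := by
  set F := ∫ a, f a ^ 2 ∂μ
  set G := ∫ a, g a ^ 2 ∂μ
  set D := ∫ a, (f a - g a) ^ 2 ∂μ
  have hsqF : √F ^ 2 = F := Real.sq_sqrt hF.le
  have hsqG : √G ^ 2 = G := Real.sq_sqrt hG.le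
  have hsqrtF : 0 < √F := Real.sqrt_pos.2 hF
  have hsqrtG : 0 < √G := Real.sqrt_pos.2 hG
  have hnorms : (√G - √F) ^ 2 ≤ D := by
    have := integral_mul_le_sqrt_mul_sqrt hf hg
    nlinarith [integral_sq_sub_eq hf hg]
  have hfg : Integrable (fun a => (f a - g a) ^ 2) μ := (hf.sub hg).integrable_sq
  have hpt : ∀ a, (f a / √F - g a / √G) ^ 2
      ≤ 2 / F * (f a - g a) ^ 2 + 2 * (√G - √F) ^ 2 / (F * G) * g a ^ 2 := by
    intro a
    set u := (f a - g a) / √F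
    set v := (√G - √F) / (√F * √G) * g a
    have key : f a / √F - g a / √G = u + v := by
      simp only [u, v]; field_simp; ring
    have hu : u ^ 2 = 1 / F * (f a - g a) ^ 2 := by
      rw [div_pow, hsqF]; ring
    have hv : v ^ 2 = (√G - √F) ^ 2 / (F * G) * g a ^ 2 := by
      rw [mul_pow, div_pow, mul_pow, hsqF, hsqG]
    calc (f a / √F - g a / √G) ^ 2 = (u + v) ^ 2 := by rw [key]
      _ ≤ 2 * u ^ 2 + 2 * v ^ 2 := by nlinarith [sq_nonneg (u - v)]
      _ = _ := by rw [hu, hv]; ring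
  calc ∫ a, (f a / √F - g a / √G) ^ 2 ∂μ
      ≤ ∫ a, (2 / F * (f a - g a) ^ 2 + 2 * (√G - √F) ^ 2 / (F * G) * g a ^ 2) ∂μ := by
        refine integral_mono ?_ ((hfg.const_mul _).add (hg.integrable_sq.const_mul _)) hpt
        simpa only [div_eq_mul_inv, Pi.sub_apply] using
          ((hf.mul_const _).sub (hg.mul_const _)).integrable_sq
    _ = 2 / F * D + 2 * (√G - √F) ^ 2 / F := by
        rw [integral_add (hfg.const_mul _) (hg.integrable_sq.const_mul _), integral_const_mul,
          integral_const_mul]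
        change 2 / F * D + 2 * (√G - √F) ^ 2 / (F * G) * G = _
        field_simp
    _ ≤ 4 / F * D := by
        rw [show 4 / F * D = 2 / F * D + 2 * D / F by ring]
        gcongr

end L2

section Posterior

variable {X : Type*} [MeasurableSpace X] {μ : Measure X} {Φ Ψ : X → ℝ}

lemma isProbabilityMeasure_posteriorMeasure [NeZero μ]
    (hΦ : Integrable (fun u => Real.exp (-Φ u)) μ) :
    IsProbabilityMeasure (posteriorMeasure μ Φ) := by
  have hZ := integral_exp_pos hΦ
  constructor
  rw [posteriorMeasure, withDensity_apply _ MeasurableSet.univ, Measure.restrict_univ,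
    ← ofReal_integral_eq_lintegral_ofReal (hΦ.const_mul _)
      (ae_of_all _ fun u => by positivity),
    integral_const_mul, inv_mul_cancel₀ hZ.ne', ENNReal.ofReal_one]

lemma sqrt_toReal_rnDeriv_posteriorMeasure [SigmaFinite μ]
    (hΦ : Integrable (fun u => Real.exp (-Φ u)) μ) :
    (fun u => √((posteriorMeasure μ Φ).rnDeriv μ u).toReal)
      =ᵐ[μ] fun u => Real.exp (-Φ u / 2) / √(∫ v, Real.exp (-Φ v) ∂μ) := by
  have hdens := Measure.rnDeriv_withDensity₀ μ
    ((hΦ.aemeasurable.const_mul (∫ v, Real.exp (-Φ v) ∂μ)⁻¹).ennreal_ofReal)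
  filter_upwards [hdens] with u hu
  rw [posteriorMeasure, hu, ENNReal.toReal_ofReal (by positivity), inv_mul_eq_div,
    Real.sqrt_div' _ (integral_nonneg fun v => (Real.exp_pos _).le), Real.exp_half]

lemma memLp_two_exp_neg_half (hΦ : Integrable (fun u => Real.exp (-Φ u)) μ) :
    MemLp (fun u => Real.exp (-Φ u / 2)) 2 μ := by
  refine (memLp_two_iff_integrable_sq ?_).2 (by simpa only [exp_half_sq] using hΦ)
  simpa only [Real.exp_half] using hΦ.aemeasurable.sqrt.aestronglyMeasurable

lemma hellingerDist_posteriorMeasure_le [SigmaFinite μ] [NeZero μ]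
    (hΦ : Integrable (fun u => Real.exp (-Φ u)) μ)
    (hΨ : Integrable (fun u => Real.exp (-Ψ u)) μ) :
    hellingerDist (posteriorMeasure μ Φ) (posteriorMeasure μ Ψ) μ
      ≤ √(2 / (∫ u, Real.exp (-Φ u) ∂μ)
          * ∫ u, (Real.exp (-Φ u / 2) - Real.exp (-Ψ u / 2)) ^ 2 ∂μ) := by
  have hsq : ∀ Φ : X → ℝ,
      ∫ u, Real.exp (-Φ u / 2) ^ 2 ∂μ = ∫ u, Real.exp (-Φ u) ∂μ := fun Φ => by
    simp only [exp_half_sq]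
  have hnormalize := integral_sq_sub_normalize_le (memLp_two_exp_neg_half hΦ)
    (memLp_two_exp_neg_half hΨ) (by simpa only [hsq] using integral_exp_pos hΦ)
    (by simpa only [hsq] using integral_exp_pos hΨ)
  rw [hsq, hsq] at hnormalize
  rw [hellingerDist]
  refine Real.sqrt_le_sqrt ?_
  have hdens : (fun u => (√((posteriorMeasure μ Φ).rnDeriv μ u).toReal
      - √((posteriorMeasure μ Ψ).rnDeriv μ u).toReal) ^ 2)
      =ᵐ[μ] fun u => (Real.exp (-Φ u / 2) / √(∫ v, Real.exp (-Φ v) ∂μ)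
        - Real.exp (-Ψ u / 2) / √(∫ v, Real.exp (-Ψ v) ∂μ)) ^ 2 := by
    filter_upwards [sqrt_toReal_rnDeriv_posteriorMeasure hΦ,
      sqrt_toReal_rnDeriv_posteriorMeasure hΨ] with u hΦu hΨu
    rw [hΦu, hΨu]
  rw [integral_congr_ae hdens]
  generalize ∫ u, Real.exp (-Φ u) ∂μ = Z at hnormalize ⊢
  generalize ∫ u, (Real.exp (-Φ u / 2) - Real.exp (-Ψ u / 2)) ^ 2 ∂μ = D at hnormalize ⊢
  linarith [show 4 / Z * D = 2 * (2 / Z * D) by ring]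

lemma exp_neg_mul_measureReal_le_integral_exp_neg [IsFiniteMeasure μ]
    (hΦ : Integrable (fun u => Real.exp (-Φ u)) μ) {s : Set X} (hs : MeasurableSet s) {K : ℝ}
    (hK : ∀ u ∈ s, Φ u ≤ K) :
    Real.exp (-K) * μ.real s ≤ ∫ u, Real.exp (-Φ u) ∂μ :=
  (setIntegral_ge_of_const_le_real hs (measure_ne_top _ _)
    (fun u hu => Real.exp_le_exp.2 (neg_le_neg (hK u hu))) hΦ.integrableOn).trans
    (setIntegral_le_integral hΦ (ae_of_all _ fun _ => (Real.exp_pos _).le))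

end Posterior

section NormedDomain

variable {X : Type*} [NormedAddCommGroup X] [MeasurableSpace X] {μ : Measure X} {κ : ℝ}

lemma integrable_exp_neg_of_le {Φ : X → ℝ} (hexp : Integrable (fun u => Real.exp (κ * ‖u‖)) μ)
    (hΦ : AEStronglyMeasurable Φ μ) {α M : ℝ} (hα : α ≤ κ) (hΦM : ∀ u, M - α * ‖u‖ ≤ Φ u) :
    Integrable (fun u => Real.exp (-Φ u)) μ := by
  refine (hexp.const_mul (Real.exp (-M))).mono
    (Real.continuous_exp.comp_aestronglyMeasurable hΦ.neg) (ae_of_all _ fun u => ?_)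
  rw [Real.norm_of_nonneg (Real.exp_pos _).le, Real.norm_of_nonneg (by positivity),
    ← Real.exp_add]
  gcongr
  nlinarith [hΦM u, norm_nonneg u]

lemma integral_sq_exp_neg_half_sub_le (hexp : Integrable (fun u => Real.exp (κ * ‖u‖)) μ)
    {Φ Ψ : X → ℝ} {M C t α₁ α₂ : ℝ} (hκ : α₁ + 2 * α₂ ≤ κ)
    (hΦ : ∀ u, M - α₁ * ‖u‖ ≤ Φ u) (hΨ : ∀ u, M - α₁ * ‖u‖ ≤ Ψ u)
    (hΦΨ : ∀ u, |Φ u - Ψ u| ≤ Real.exp (α₂ * ‖u‖ + C) * t) :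
    ∫ u, (Real.exp (-Φ u / 2) - Real.exp (-Ψ u / 2)) ^ 2 ∂μ
      ≤ Real.exp (2 * C - M) * (∫ u, Real.exp (κ * ‖u‖) ∂μ) * t ^ 2 / 4 := by
  calc ∫ u, (Real.exp (-Φ u / 2) - Real.exp (-Ψ u / 2)) ^ 2 ∂μ
      ≤ ∫ u, Real.exp (2 * C - M) * Real.exp (κ * ‖u‖) * t ^ 2 / 4 ∂μ :=
        integral_mono_of_nonneg (ae_of_all _ fun _ => sq_nonneg _)
          ((hexp.const_mul _).mul_const _ |>.div_const _) (ae_of_all _ fun u =>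
            sq_exp_neg_half_sub_le (norm_nonneg u) hκ (hΦ u) (hΨ u) (hΦΨ u))
    _ = _ := by rw [integral_div, integral_mul_const, integral_const_mul]

lemma exists_pos_forall_le_integral_exp_neg [OpensMeasurableSpace X] {Y : Type*} [Norm Y]
    [IsFiniteMeasure μ] [NeZero μ] {Φ : X → Y → ℝ}
    (hint : ∀ y, Integrable (fun u => Real.exp (-Φ u y)) μ)
    (hub : ∀ R > (0 : ℝ), ∃ K, ∀ u y, max ‖u‖ ‖y‖ < R → Φ u y ≤ K) {r : ℝ} (hr : 0 < r) :
    ∃ Z₀ > 0, ∀ y, ‖y‖ < r → Z₀ ≤ ∫ u, Real.exp (-Φ u y) ∂μ := by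
  obtain ⟨n, hn⟩ := exists_pos_ball (0 : X) (NeZero.ne μ)
  obtain ⟨K, hK⟩ := hub (n + r) (by positivity)
  refine ⟨Real.exp (-K) * μ.real (Metric.ball 0 n),
    mul_pos (Real.exp_pos _) (ENNReal.toReal_pos hn.ne' (measure_ne_top _ _)),
    fun y hy => exp_neg_mul_measureReal_le_integral_exp_neg (hint y) measurableSet_ball
      fun u hu => hK u y (max_lt ?_ ?_)⟩
  · linarith [mem_ball_zero_iff.1 hu]
  · linarith [(Nat.cast_nonneg n : (0 : ℝ) ≤ n)]

end NormedDomain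

theorem convex_prior_wellposed_general
    {X Y : Type*} [NormedAddCommGroup X]
    [MeasurableSpace X] [BorelSpace X]
    [NormedAddCommGroup Y]
    (μ₀ : Measure X) [IsProbabilityMeasure μ₀]
    (κ : ℝ)
    (hexp : Integrable (fun u => Real.exp (κ * ‖u‖)) μ₀)
    (Φ : X → Y → ℝ) (hcont : ∀ y : Y, Continuous fun u => Φ u y)
    (α₁ α₂ : ℝ) (hα₂ : 0 ≤ α₂) (hκα : α₁ + 2 * α₂ ≤ κ)
    (hlb : ∀ r > (0 : ℝ), ∃ M : ℝ, ∀ u : X, ∀ y : Y, ‖y‖ < r →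
      M - α₁ * ‖u‖ ≤ Φ u y)
    (hub : ∀ r > (0 : ℝ), ∃ K > (0 : ℝ), ∀ u : X, ∀ y : Y,
      max ‖u‖ ‖y‖ < r → Φ u y ≤ K)
    (hlipy : ∀ r > (0 : ℝ), ∃ C : ℝ, ∀ u : X, ∀ y₁ y₂ : Y, ‖y₁‖ < r → ‖y₂‖ < r →
      |Φ u y₁ - Φ u y₂| ≤ Real.exp (α₂ * ‖u‖ + C) * ‖y₁ - y₂‖) :
    (∀ y : Y,
      Integrable (fun u => Real.exp (-(Φ u y))) μ₀ ∧
      0 < ∫ u, Real.exp (-(Φ u y)) ∂μ₀ ∧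
      IsProbabilityMeasure (posteriorMeasure μ₀ fun u => Φ u y)) ∧
    ∀ r > (0 : ℝ), ∃ C > (0 : ℝ), ∀ y y' : Y, ‖y‖ < r → ‖y'‖ < r →
      hellingerDist (posteriorMeasure μ₀ fun u => Φ u y)
          (posteriorMeasure μ₀ fun u => Φ u y') μ₀ ≤ C * ‖y - y'‖ := by
  have hint : ∀ y, Integrable (fun u => Real.exp (-Φ u y)) μ₀ := fun y => by
    obtain ⟨M, hM⟩ := hlb (‖y‖ + 1) (by positivity)
    exact integrable_exp_neg_of_le hexp (hcont y).aestronglyMeasurable (by linarith)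
      fun u => hM u y (by linarith)
  refine ⟨fun y => ⟨hint y, integral_exp_pos (hint y),
    isProbabilityMeasure_posteriorMeasure (hint y)⟩, fun r hr => ?_⟩
  obtain ⟨M, hM⟩ := hlb r hr
  obtain ⟨C, hC⟩ := hlipy r hr
  obtain ⟨Z₀, hZ₀, hZ⟩ := exists_pos_forall_le_integral_exp_neg hint
    (fun R hR => (hub R hR).imp fun _ hK => hK.2) hr
  set G := ∫ u, Real.exp (κ * ‖u‖) ∂μ₀
  have hG : 0 < G := integral_exp_pos hexp
  refine ⟨√(Real.exp (2 * C - M) * G / (2 * Z₀)), by positivity, fun y y' hy hy' => ?_⟩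
  calc _ ≤ √(2 / (∫ u, Real.exp (-Φ u y) ∂μ₀)
          * ∫ u, (Real.exp (-Φ u y / 2) - Real.exp (-Φ u y' / 2)) ^ 2 ∂μ₀) :=
        hellingerDist_posteriorMeasure_le (hint y) (hint y')
    _ ≤ √(2 / Z₀ * (Real.exp (2 * C - M) * G * ‖y - y'‖ ^ 2 / 4)) := by
        gcongr
        · exact hZ y hy
        · exact integral_sq_exp_neg_half_sub_le hexp hκα (hM · y hy) (hM · y' hy')
            fun u => hC u y y' hy hy'
    _ = √(Real.exp (2 * C - M) * G / (2 * Z₀)) * ‖y - y'‖ := by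
        rw [← Real.sqrt_sq (norm_nonneg (y - y')), ← Real.sqrt_mul (by positivity),
          Real.sqrt_sq (norm_nonneg _)]
        congr 1
        field_simp
        ring

/-- Well-posedness of Bayesian inverse problems with a convex prior: if `μ₀` is a convex
Radon probability measure with `∫ exp(κ‖u‖) dμ₀ < ∞` for `κ ≥ α₁ + 2α₂` and `Φ`
satisfies conditions (i)–(iv), then the posterior is a well-defined probability measure
for every `y` and is locally Lipschitz in the data in the Hellinger metric. -/
theorem convex_prior_wellposed
    {X Y : Type*} [NormedAddCommGroup X] [NormedSpace ℝ X] [CompleteSpace X]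
    [MeasurableSpace X] [BorelSpace X]
    [NormedAddCommGroup Y] [NormedSpace ℝ Y] [CompleteSpace Y]
    (μ₀ : Measure X) [IsProbabilityMeasure μ₀]
    (hreg : μ₀.InnerRegular) (hconv : IsConvexMeasure μ₀)
    (κ : ℝ) (hκ : 0 < κ)
    (hexp : Integrable (fun u => Real.exp (κ * ‖u‖)) μ₀)
    (Φ : X → Y → ℝ) (hcont : ∀ y : Y, Continuous fun u => Φ u y)
    (α₁ α₂ : ℝ) (hα₁ : 0 ≤ α₁) (hα₂ : 0 ≤ α₂) (hκα : α₁ + 2 * α₂ ≤ κ)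
    (hlb : ∀ r > (0 : ℝ), ∃ M : ℝ, ∀ u : X, ∀ y : Y, ‖y‖ < r →
      M - α₁ * ‖u‖ ≤ Φ u y)
    (hub : ∀ r > (0 : ℝ), ∃ K > (0 : ℝ), ∀ u : X, ∀ y : Y,
      max ‖u‖ ‖y‖ < r → Φ u y ≤ K)
    (hlipu : ∀ r > (0 : ℝ), ∃ L > (0 : ℝ), ∀ u₁ u₂ : X, ∀ y : Y,
      max (max ‖u₁‖ ‖u₂‖) ‖y‖ < r →
      |Φ u₁ y - Φ u₂ y| ≤ L * ‖u₁ - u₂‖)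
    (hlipy : ∀ r > (0 : ℝ), ∃ C : ℝ, ∀ u : X, ∀ y₁ y₂ : Y, ‖y₁‖ < r → ‖y₂‖ < r →
      |Φ u y₁ - Φ u y₂| ≤ Real.exp (α₂ * ‖u‖ + C) * ‖y₁ - y₂‖) :
    (∀ y : Y,
      Integrable (fun u => Real.exp (-(Φ u y))) μ₀ ∧
      0 < ∫ u, Real.exp (-(Φ u y)) ∂μ₀ ∧
      IsProbabilityMeasure (posteriorMeasure μ₀ fun u => Φ u y)) ∧
    ∀ r > (0 : ℝ), ∃ C > (0 : ℝ), ∀ y y' : Y, ‖y‖ < r → ‖y'‖ < r →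
      hellingerDist (posteriorMeasure μ₀ fun u => Φ u y)
          (posteriorMeasure μ₀ fun u => Φ u y') μ₀ ≤ C * ‖y - y'‖ :=
  convex_prior_wellposed_general μ₀ κ hexp Φ hcont α₁ α₂ hα₂ hκα hlb hub hlipy
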